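/- arXiv:1108.4086 — 3 statements merged into one kernel-verified Lean document; each statement's English description precedes it below -/
import Mathlib

section
/- Let f: R^n → R be convex and differentiable. Let (X_t)_{t∈Z} be a real-valued stationary process with law μ on R^Z such that X_0 and each ∂_k f(X_0,…,X_{n−1}) are square integrable. Define S_0(x) = Σ_{k=0}^{n−1} ∂_k f(x_{−k},…,x_{−k+n−1}) and S_t(x) = S_0(L^{−t}x). Then for every jointly stationary pair (Y, Z) with Y distributed as μ and Z distributed as the law of S(X), one has E[(X_0 − S_0(X))²] ≤ E[(Y_0 − Z_0)²]. -/
open MeasureTheory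

/-- The left shift on bilateral real sequences: `(L x) t = x (t-1)`. -/
def leftShift (x : ℤ → ℝ) : ℤ → ℝ := fun t => x (t - 1)

/-- `S_0(x) = ∑_{k=0}^{n-1} ∂_k f (x_{-k}, …, x_{-k+n-1})` for differentiable `f : ℝⁿ → ℝ`. -/
noncomputable def S0 {n : ℕ} (f : (Fin n → ℝ) → ℝ) (x : ℤ → ℝ) : ℝ :=
  ∑ k : Fin n, fderiv ℝ f (fun j : Fin n => x ((j : ℤ) - (k : ℤ))) (Pi.single k 1)

/-- The equivariant map `S` with `S_t(x) = S_0(L^{-t} x)`, `(L^{-t}x)_s = x_{s+t}`. -/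
noncomputable def Smap {n : ℕ} (f : (Fin n → ℝ) → ℝ) : (ℤ → ℝ) → (ℤ → ℝ) :=
  fun x t => S0 f (fun s => x (s + t))

/-!
Expanding both squares, and using that `Y₀ ∼ X₀` and `Z₀ ∼ S₀(X)`, the claim reduces to
`E[Y₀ Z₀] ≤ E[X₀ S₀(X)]`. Glue the coupling `(Y, Z)` to a copy `W` of `X` with `Z = S(W)`, and
write `Y[s] = (Yₛ, …, Yₛ₊ₙ₋₁)`, `W[s]` likewise. Joint stationarity of `(Y, Z)` gives
`E[Y₀ Z₀] = E[Yₜ Zₜ] = ∑ₖ g(t - k, k)` for every `t`, where `g(s, k) = E[Yₛ₊ₖ ∂ₖf(W[s])]`.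
Since `Y[s]` and `W[s]` both have the law of `X[0]`, the gradient inequality gives
`∑ₖ g(s, k) = E[∇f(W[s])·Y[s]] ≤ E[f(Y[s]) - f(W[s]) + ∇f(W[s])·W[s]] = E[X₀ S₀(X)]`.
The pair `(Y, W)` need not be jointly stationary, so the two facts are compared after averaging
over `t < N`: the shifts by `k < n` only cost boundary terms, which vanish as `N → ∞`.
-/

open ProbabilityTheory

theorem MeasureTheory.MeasurePreserving.integral_comp_of_aestronglyMeasurable
    {α β G : Type*} [MeasurableSpace α] [MeasurableSpace β] [NormedAddCommGroup G]
    [NormedSpace ℝ G] {μ : Measure α} {ν : Measure β} {T : α → β}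
    (hT : MeasurePreserving T μ ν) {g : β → G} (hg : AEStronglyMeasurable g ν) :
    ∫ x, g (T x) ∂μ = ∫ y, g y ∂ν := by
  rw [← hT.map_eq] at hg ⊢
  exact (integral_map hT.measurable.aemeasurable hg).symm

theorem MeasureTheory.abs_integral_mul_le_half_add {α : Type*} [MeasurableSpace α]
    {μ : Measure α} {u v : α → ℝ} (hu : MemLp u 2 μ) (hv : MemLp v 2 μ) :
    |∫ a, u a * v a ∂μ| ≤ (∫ a, u a ^ 2 ∂μ + ∫ a, v a ^ 2 ∂μ) / 2 := by
  rw [← integral_add hu.integrable_sq hv.integrable_sq, ← integral_div]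
  refine abs_integral_le_integral_abs.trans (integral_mono (hu.integrable_mul hv).abs
    ((hu.integrable_sq.add hv.integrable_sq).div_const 2) fun a => ?_)
  have := two_mul_le_add_sq |u a| |v a|
  rw [sq_abs, sq_abs] at this
  dsimp only
  rw [abs_mul]
  linarith

theorem MeasureTheory.integral_sub_sq {α : Type*} [MeasurableSpace α] {μ : Measure α}
    {u v : α → ℝ} (hu : MemLp u 2 μ) (hv : MemLp v 2 μ) :
    ∫ a, (u a - v a) ^ 2 ∂μ
      = ∫ a, u a ^ 2 ∂μ - 2 * ∫ a, u a * v a ∂μ + ∫ a, v a ^ 2 ∂μ := by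
  have huv : Integrable (fun a => 2 * (u a * v a)) μ := (hu.integrable_mul hv).const_mul 2
  simp_rw [sub_sq, mul_assoc]
  rw [integral_add (f := fun a => u a ^ 2 - 2 * (u a * v a)) (hu.integrable_sq.sub huv)
    hv.integrable_sq,
    integral_sub hu.integrable_sq huv, integral_const_mul]

theorem MeasureTheory.measurePreserving_of_map_neg_one {α : Type*} [MeasurableSpace α]
    {P : Measure α} {T : ℤ → α → α} (hT : ∀ m, Measurable (T m)) (h0 : T 0 = id)
    (hadd : ∀ a b, T (a + b) = T a ∘ T b) (h : P.map (T (-1)) = P) (m : ℤ) :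
    MeasurePreserving (T m) P P := by
  refine ⟨hT m, ?_⟩
  have h1 : P.map (T 1) = P := by
    conv_lhs => rw [← h]
    rw [Measure.map_map (hT 1) (hT (-1)), ← hadd, add_neg_cancel, h0, Measure.map_id]
  induction m using Int.induction_on with
  | zero => rw [h0, Measure.map_id]
  | succ i ih => rw [hadd, ← Measure.map_map (hT i) (hT 1), h1, ih]
  | pred i ih => rw [sub_eq_add_neg, hadd, ← Measure.map_map (hT _) (hT _), h, ih]

theorem MeasureTheory.Measure.exists_kernel_comp_map_eq_and_ae_eq
    {Ω Δ : Type*} [MeasurableSpace Ω] [MeasurableEq Ω] [MeasurableSpace Δ]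
    [StandardBorelSpace Δ] [Nonempty Δ] {Q : Measure Δ} [IsFiniteMeasure Q] {T : Δ → Ω}
    (hT : Measurable T) :
    ∃ κ : Kernel Ω Δ, IsMarkovKernel κ ∧ κ ∘ₘ Q.map T = Q ∧
      ∀ᵐ z ∂(Q.map T), ∀ᵐ w ∂κ z, z = T w := by
  set graph : Measure (Ω × Δ) := Q.map fun w => (T w, w)
  have hgraph : Measurable fun w => (T w, w) := hT.prodMk measurable_id
  have hfst : graph.fst = Q.map T := by
    rw [Measure.fst, Measure.map_map measurable_fst hgraph]; rfl
  have hmeas : MeasurableSet {p : Ω × Δ | p.1 = T p.2} :=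
    measurableSet_eq_fun measurable_fst (hT.comp measurable_snd)
  refine ⟨graph.condKernel, inferInstance, ?_, ?_⟩
  · rw [← hfst, ← Measure.snd_compProd, graph.disintegrate, Measure.snd,
      Measure.map_map measurable_snd hgraph]
    exact Measure.map_id
  · rw [← hfst, ← Measure.ae_compProd_iff hmeas, graph.disintegrate]
    exact (ae_map_iff hgraph.aemeasurable hmeas).2 (ae_of_all _ fun w => rfl)

theorem MeasureTheory.Measure.exists_map_snd_eq_and_map_prodMap_eq
    {Γ Ω Δ : Type*} [MeasurableSpace Γ] [MeasurableSpace Ω] [MeasurableEq Ω]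
    [MeasurableSpace Δ] [StandardBorelSpace Δ] [Nonempty Δ]
    {π : Measure (Γ × Ω)} [SFinite π] {Q : Measure Δ} [IsFiniteMeasure Q]
    {T : Δ → Ω} (hT : Measurable T) (hπ : π.map Prod.snd = Q.map T) :
    ∃ σ : Measure (Γ × Δ), σ.map Prod.snd = Q ∧ σ.map (Prod.map id T) = π := by
  obtain ⟨κ, _, hκQ, hκT⟩ := exists_kernel_comp_map_eq_and_ae_eq (Q := Q) hT
  set τ : Measure ((Γ × Ω) × Δ) := π ⊗ₘ κ.comap Prod.snd measurable_snd
  have hτsnd : τ.snd = Q := by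
    rw [Measure.snd_compProd, ← Kernel.comp_deterministic_eq_comap, ← Measure.comp_assoc,
      Measure.deterministic_comp_eq_map, hπ, hκQ]
  have hτT : ∀ᵐ q ∂τ, q.1.2 = T q.2 := by
    refine (Measure.ae_compProd_iff (p := fun q : (Γ × Ω) × Δ => q.1.2 = T q.2)
      (measurableSet_eq_fun measurable_fst.snd (hT.comp measurable_snd))).2 ?_
    rw [← hπ] at hκT
    exact ae_of_ae_map measurable_snd.aemeasurable hκT
  refine ⟨τ.map fun q => (q.1.1, q.2), ?_, ?_⟩
  · rw [Measure.map_map measurable_snd (measurable_fst.fst.prodMk measurable_snd)]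
    exact hτsnd
  · rw [Measure.map_map (measurable_id.prodMap hT) (measurable_fst.fst.prodMk measurable_snd),
      Measure.map_congr (g := Prod.fst) ?_]
    · exact Measure.fst_compProd π _
    · filter_upwards [hτT] with q hq
      rw [Function.comp_apply, Prod.map_apply, ← hq]; rfl

open Finset in
theorem abs_sum_range_sub_sum_range_shift_le {h : ℤ → ℝ} {C : ℝ} (hC : ∀ s, |h s| ≤ C)
    (N d : ℕ) : |∑ t ∈ range N, h (t - d) - ∑ t ∈ range N, h t| ≤ 2 * d * C := by
  induction d with
  | zero => simp
  | succ d ih =>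
    have htele : ∑ t ∈ range N, h (t - (d + 1 : ℕ)) - ∑ t ∈ range N, h (t - d)
        = h (-(d + 1 : ℕ)) - h (N - (d + 1 : ℕ)) := by
      rw [← sum_sub_distrib]
      convert sum_range_sub' (fun t : ℕ => h (t - (d + 1 : ℕ))) N using 1
      · refine sum_congr rfl fun t _ => ?_
        push_cast; ring_nf
      · simp
    calc |∑ t ∈ range N, h (t - (d + 1 : ℕ)) - ∑ t ∈ range N, h t|
        ≤ |∑ t ∈ range N, h (t - (d + 1 : ℕ)) - ∑ t ∈ range N, h (t - d)|
          + |∑ t ∈ range N, h (t - d) - ∑ t ∈ range N, h t| := abs_sub_le _ _ _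
      _ ≤ (C + C) + 2 * d * C := by
          rw [htele]
          exact add_le_add ((abs_sub _ _).trans (add_le_add (hC _) (hC _))) ih
      _ = 2 * (d + 1 : ℕ) * C := by push_cast; ring

open Finset in
theorem le_of_forall_eq_sum_shift {n : ℕ} {g : ℤ → Fin n → ℝ} {c D : ℝ}
    (hg : ∀ k, ∃ C, ∀ s, |g s k| ≤ C) (hc : ∀ t : ℤ, c = ∑ k : Fin n, g (t - k) k)
    (hD : ∀ s, ∑ k, g s k ≤ D) : c ≤ D := by
  choose C hC using hg
  set E := ∑ k : Fin n, 2 * (k : ℕ) * C k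
  have hN : ∀ N : ℕ, N * c ≤ N * D + E := fun N => calc
    N * c = ∑ t ∈ range N, c := by rw [sum_const, card_range, nsmul_eq_mul]
    _ = ∑ k : Fin n, ∑ t ∈ range N, g (t - (k : ℕ)) k := by
        rw [sum_comm]; exact sum_congr rfl fun t _ => hc t
    _ ≤ ∑ k : Fin n, (∑ t ∈ range N, g t k + 2 * (k : ℕ) * C k) := by
        gcongr with k
        linarith [le_abs_self _ |>.trans
          (abs_sum_range_sub_sum_range_shift_le (h := (g · k)) (hC k) N k)]
    _ = ∑ t ∈ range N, ∑ k, g t k + E := by rw [sum_add_distrib, sum_comm]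
    _ ≤ ∑ t ∈ range N, D + E := by gcongr with t; exact hD t
    _ = N * D + E := by rw [sum_const, card_range, nsmul_eq_mul]
  by_contra! hlt
  obtain ⟨N, hNE⟩ := exists_nat_gt (E / (c - D))
  rw [div_lt_iff₀ (sub_pos.2 hlt)] at hNE
  linarith [hN N]

theorem ConvexOn.fderiv_apply_sub_le {E : Type*} [NormedAddCommGroup E] [NormedSpace ℝ E]
    {f : E → ℝ} (hf : ConvexOn ℝ Set.univ f) {v : E} (hv : DifferentiableAt ℝ f v) (u : E) :
    fderiv ℝ f v (u - v) ≤ f u - f v := by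
  set g : ℝ → ℝ := f ∘ AffineMap.lineMap (k := ℝ) v u
  have hg : ConvexOn ℝ Set.univ g := by
    simpa using hf.comp_affineMap (AffineMap.lineMap v u)
  have hline : HasDerivAt (AffineMap.lineMap (k := ℝ) v u) (u - v) 0 :=
    AffineMap.hasDerivAt_lineMap
  have hder : HasDerivAt g (fderiv ℝ f v (u - v)) 0 := by
    have := (AffineMap.lineMap_apply_zero (k := ℝ) v u ▸ hv).hasFDerivAt.comp_hasDerivAt 0 hline
    simpa using this
  simpa [slope, g] using hg.le_slope_of_hasDerivAt (Set.mem_univ 0) (Set.mem_univ 1) one_pos hder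

theorem ContinuousLinearMap.apply_eq_sum_mul_single {n : ℕ} (L : (Fin n → ℝ) →L[ℝ] ℝ)
    (u : Fin n → ℝ) : L u = ∑ k, u k * L (Pi.single k 1) := by
  conv_lhs => rw [← Finset.univ_sum_single u]
  rw [map_sum]
  refine Finset.sum_congr rfl fun k _ => ?_
  rw [← smul_eq_mul, ← map_smul, ← Pi.single_smul, smul_eq_mul, mul_one]

section Gradient

variable {n : ℕ} {f : (Fin n → ℝ) → ℝ}

theorem integrable_fderiv_apply {α : Type*} [MeasurableSpace α] {μ : Measure α}
    {U V : α → Fin n → ℝ} (hU : ∀ k, MemLp (fun a => U a k) 2 μ)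
    (hV : ∀ k, MemLp (fun a => fderiv ℝ f (V a) (Pi.single k 1)) 2 μ) :
    Integrable (fun a => fderiv ℝ f (V a) (U a)) μ := by
  simp only [ContinuousLinearMap.apply_eq_sum_mul_single (fderiv ℝ f (V _)) (U _)]
  exact integrable_finsetSum _ fun k _ => (hU k).integrable_mul (hV k)

variable (hf : ConvexOn ℝ Set.univ f) (hd : Differentiable ℝ f) {ν : Measure (Fin n → ℝ)}
  (hcoord : ∀ k, MemLp (fun v => v k) 2 ν)
  (hgrad : ∀ k, MemLp (fun v => fderiv ℝ f v (Pi.single k 1)) 2 ν)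
include hf hd hcoord hgrad

theorem ConvexOn.integrable_of_memLp [IsFiniteMeasure ν] : Integrable f ν := by
  refine integrable_of_le_of_le (g₁ := fun v => f 0 + fderiv ℝ f 0 v)
    (g₂ := fun v => f 0 + fderiv ℝ f v v) hd.continuous.aestronglyMeasurable
    (ae_of_all _ fun v => ?_) (ae_of_all _ fun v => ?_) ?_ ?_
  · linarith [sub_zero v ▸ hf.fderiv_apply_sub_le (hd 0) v]
  · linarith [map_neg (fderiv ℝ f v) v ▸ zero_sub v ▸ hf.fderiv_apply_sub_le (hd v) 0]
  · exact (integrable_const _).add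
      (integrable_fderiv_apply (V := fun _ => 0) hcoord fun _ => memLp_const _)
  · exact (integrable_const _).add (integrable_fderiv_apply (V := id) hcoord hgrad)

theorem ConvexOn.integral_fderiv_apply_le {α : Type*} [MeasurableSpace α] [IsFiniteMeasure ν]
    {σ : Measure α} {U V : α → Fin n → ℝ} (hU : MeasurePreserving U σ ν)
    (hV : MeasurePreserving V σ ν) :
    ∫ a, fderiv ℝ f (V a) (U a) ∂σ ≤ ∫ v, fderiv ℝ f v v ∂ν := by
  have hfν : Integrable f ν := hf.integrable_of_memLp hd hcoord hgrad
  have hDν : Integrable (fun v => fderiv ℝ f v v) ν :=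
    integrable_fderiv_apply (V := id) hcoord hgrad
  have hfU : Integrable (fun a => f (U a)) σ := hU.integrable_comp_of_integrable hfν
  have hfV : Integrable (fun a => f (V a)) σ := hV.integrable_comp_of_integrable hfν
  have hDV : Integrable (fun a => fderiv ℝ f (V a) (V a)) σ :=
    hV.integrable_comp_of_integrable hDν
  calc ∫ a, fderiv ℝ f (V a) (U a) ∂σ
      ≤ ∫ a, f (U a) - f (V a) + fderiv ℝ f (V a) (V a) ∂σ := by
        refine integral_mono (integrable_fderiv_apply
          (fun k => (hcoord k).comp_measurePreserving hU)
          (fun k => (hgrad k).comp_measurePreserving hV)) ((hfU.sub hfV).add hDV) fun a => ?_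
        have := hf.fderiv_apply_sub_le (hd (V a)) (U a)
        rw [map_sub] at this
        dsimp only
        linarith
    _ = ∫ v, fderiv ℝ f v v ∂ν := by
        rw [integral_add (f := fun a => f (U a) - f (V a)) (hfU.sub hfV) hDV,
          integral_sub hfU hfV,
          hU.integral_comp_of_aestronglyMeasurable hfν.aestronglyMeasurable,
          hV.integral_comp_of_aestronglyMeasurable hfν.aestronglyMeasurable,
          hV.integral_comp_of_aestronglyMeasurable (g := fun v => fderiv ℝ f v v)
            hDν.aestronglyMeasurable, sub_self, zero_add]

end Gradient

namespace StationaryCoupling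

def shift (m : ℤ) (x : ℤ → ℝ) : ℤ → ℝ := fun t => x (t + m)

theorem measurable_shift (m : ℤ) : Measurable (shift m) :=
  measurable_pi_lambda _ fun _ => measurable_pi_apply _

theorem shift_zero : shift 0 = id := by
  funext x t; simp [shift]

theorem shift_add (a b : ℤ) : shift (a + b) = shift a ∘ shift b := by
  funext x t; simp [shift, add_assoc]

theorem leftShift_eq_shift : leftShift = shift (-1) := by
  funext x t; simp [leftShift, shift, sub_eq_add_neg]

theorem measurable_leftShift : Measurable leftShift :=
  leftShift_eq_shift ▸ measurable_shift (-1)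

theorem measurePreserving_shift {P : Measure (ℤ → ℝ)} (h : P.map leftShift = P) (m : ℤ) :
    MeasurePreserving (shift m) P P :=
  measurePreserving_of_map_neg_one measurable_shift shift_zero shift_add
    (leftShift_eq_shift ▸ h) m

theorem measurePreserving_prodMap_shift {π : Measure ((ℤ → ℝ) × (ℤ → ℝ))}
    (h : π.map (Prod.map leftShift leftShift) = π) (m : ℤ) :
    MeasurePreserving (Prod.map (shift m) (shift m)) π π :=
  measurePreserving_of_map_neg_one (fun m => (measurable_shift m).prodMap (measurable_shift m))
    (by rw [shift_zero, Prod.map_id]) (fun a b => by rw [shift_add, Prod.map_comp_map])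
    (leftShift_eq_shift ▸ h) m

def window (n : ℕ) (s : ℤ) (x : ℤ → ℝ) : Fin n → ℝ := fun j => x (s + j)

theorem measurable_window (n : ℕ) (s : ℤ) : Measurable (window n s) :=
  measurable_pi_lambda _ fun _ => measurable_pi_apply _

theorem window_zero (n : ℕ) : window n 0 = fun x j => x j := by
  funext x j; simp [window]

theorem window_comp_shift (n : ℕ) (s t : ℤ) : window n s ∘ shift t = window n (s + t) := by
  funext x j; simp only [Function.comp_apply, window, shift]; ring_nf

theorem measurePreserving_window {n : ℕ} {P : Measure (ℤ → ℝ)}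
    (hP : ∀ m, MeasurePreserving (shift m) P P) (s : ℤ) :
    MeasurePreserving (window n s) P (P.map (window n 0)) := by
  refine ⟨measurable_window n s, ?_⟩
  rw [← zero_add s, ← window_comp_shift, ← Measure.map_map (measurable_window n 0)
    (measurable_shift s), (hP s).map_eq]

theorem S0_eq_sum_window {n : ℕ} (f : (Fin n → ℝ) → ℝ) (x : ℤ → ℝ) :
    S0 f x = ∑ k : Fin n, fderiv ℝ f (window n (-k) x) (Pi.single k 1) := by
  refine Finset.sum_congr rfl fun k _ => ?_
  congr 2
  funext j
  exact congrArg x (by ring)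

theorem Smap_apply {n : ℕ} (f : (Fin n → ℝ) → ℝ) (x : ℤ → ℝ) (t : ℤ) :
    Smap f x t = ∑ k : Fin n, fderiv ℝ f (window n (t - k) x) (Pi.single k 1) := by
  simp only [Smap, S0]
  refine Finset.sum_congr rfl fun k _ => ?_
  congr 2
  funext j
  exact congrArg x (by ring)

theorem Smap_apply_zero {n : ℕ} (f : (Fin n → ℝ) → ℝ) (x : ℤ → ℝ) : Smap f x 0 = S0 f x := by
  simp only [Smap, add_zero]

theorem measurable_S0 {n : ℕ} (f : (Fin n → ℝ) → ℝ) : Measurable (S0 f) := by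
  rw [funext (S0_eq_sum_window f)]
  exact Finset.measurable_sum _ fun k _ =>
    (measurable_fderiv_apply_const ℝ f _).comp (measurable_window n _)

theorem measurable_Smap {n : ℕ} (f : (Fin n → ℝ) → ℝ) : Measurable (Smap f) :=
  measurable_pi_lambda _ fun t => (measurable_S0 f).comp (measurable_shift t)

section Moments

variable {n : ℕ} {f : (Fin n → ℝ) → ℝ} {P : Measure (ℤ → ℝ)}
  (hP : ∀ m, MeasurePreserving (shift m) P P) (hx0 : MemLp (fun x => x 0) 2 P)
  (hgrad : ∀ k, MemLp (fun v => fderiv ℝ f v (Pi.single k 1)) 2 (P.map (window n 0)))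

include hP hx0 in
theorem memLp_apply_map_window (k : Fin n) :
    MemLp (fun v => v k) 2 (P.map (window n 0)) := by
  refine (memLp_map_measure_iff (measurable_pi_apply k).aestronglyMeasurable
    (measurable_window n 0).aemeasurable).2 ?_
  simpa [Function.comp_def, shift, window] using hx0.comp_measurePreserving (hP k)

include hP hgrad in
theorem memLp_S0 : MemLp (S0 f) 2 P := by
  rw [funext (S0_eq_sum_window f)]
  exact memLp_finsetSum _ fun k _ =>
    (hgrad k).comp_measurePreserving (measurePreserving_window hP _)

include hP hx0 hgrad in
theorem integral_mul_S0_eq :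
    ∫ x, x 0 * S0 f x ∂P = ∫ v, fderiv ℝ f v v ∂(P.map (window n 0)) := by
  have hterm : ∀ k : Fin n,
      Integrable (fun v => v k * fderiv ℝ f v (Pi.single k 1)) (P.map (window n 0)) :=
    fun k => (memLp_apply_map_window hP hx0 k).integrable_mul (hgrad k)
  calc ∫ x, x 0 * S0 f x ∂P
      = ∑ k : Fin n, ∫ x, window n (-k) x k
          * fderiv ℝ f (window n (-k) x) (Pi.single k 1) ∂P := by
        rw [← integral_finsetSum]
        · refine integral_congr_ae (ae_of_all _ fun x => ?_)
          simp only [S0_eq_sum_window, Finset.mul_sum, window, neg_add_cancel]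
        · exact fun k _ => (measurePreserving_window hP _).integrable_comp_of_integrable (hterm k)
    _ = ∑ k : Fin n, ∫ v, v k * fderiv ℝ f v (Pi.single k 1) ∂(P.map (window n 0)) :=
        Finset.sum_congr rfl fun k _ => (measurePreserving_window hP _)
          |>.integral_comp_of_aestronglyMeasurable (hterm k).aestronglyMeasurable
    _ = ∫ v, fderiv ℝ f v v ∂(P.map (window n 0)) := by
        rw [← integral_finsetSum _ fun k _ => hterm k]
        simp only [← ContinuousLinearMap.apply_eq_sum_mul_single]

end Moments

noncomputable def crossMoment {n : ℕ} (f : (Fin n → ℝ) → ℝ)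
    (σ : Measure ((ℤ → ℝ) × (ℤ → ℝ))) (s : ℤ) (k : Fin n) : ℝ :=
  ∫ p, window n s p.1 k * fderiv ℝ f (window n s p.2) (Pi.single k 1) ∂σ

section Coupling

variable {n : ℕ} {f : (Fin n → ℝ) → ℝ} {P : Measure (ℤ → ℝ)}
  (hP : ∀ m, MeasurePreserving (shift m) P P) (hx0 : MemLp (fun x => x 0) 2 P)
  (hgrad : ∀ k, MemLp (fun v => fderiv ℝ f v (Pi.single k 1)) 2 (P.map (window n 0)))
  {σ π : Measure ((ℤ → ℝ) × (ℤ → ℝ))}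
  (hσ₁ : MeasurePreserving Prod.fst σ P) (hσ₂ : MeasurePreserving Prod.snd σ P)
  (hσπ : MeasurePreserving (Prod.map id (Smap f)) σ π)
  (hπ : ∀ m, MeasurePreserving (Prod.map (shift m) (shift m)) π π)

include hP hσ₁ in
theorem measurePreserving_window_fst (s : ℤ) :
    MeasurePreserving (fun p => window n s p.1) σ (P.map (window n 0)) :=
  (measurePreserving_window hP s).comp hσ₁

include hP hσ₂ in
theorem measurePreserving_window_snd (s : ℤ) :
    MeasurePreserving (fun p => window n s p.2) σ (P.map (window n 0)) :=
  (measurePreserving_window hP s).comp hσ₂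

include hP hx0 hσ₁ in
theorem memLp_window_fst_apply (s : ℤ) (k : Fin n) :
    MemLp (fun p => window n s p.1 k) 2 σ :=
  (memLp_apply_map_window hP hx0 k).comp_measurePreserving (measurePreserving_window_fst hP hσ₁ s)

include hP hgrad hσ₂ in
theorem memLp_fderiv_window_snd (s : ℤ) (k : Fin n) :
    MemLp (fun p => fderiv ℝ f (window n s p.2) (Pi.single k 1)) 2 σ :=
  (hgrad k).comp_measurePreserving (measurePreserving_window_snd hP hσ₂ s)

include hP hx0 hgrad hσ₁ hσ₂ in
theorem abs_crossMoment_le (s : ℤ) (k : Fin n) :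
    |crossMoment f σ s k| ≤ (∫ v, v k ^ 2 ∂(P.map (window n 0))
      + ∫ v, fderiv ℝ f v (Pi.single k 1) ^ 2 ∂(P.map (window n 0))) / 2 := by
  refine (abs_integral_mul_le_half_add (memLp_window_fst_apply hP hx0 hσ₁ s k)
    (memLp_fderiv_window_snd hP hgrad hσ₂ s k)).trans_eq ?_
  rw [(measurePreserving_window_fst hP hσ₁ s).integral_comp_of_aestronglyMeasurable
      (g := fun v => v k ^ 2) (memLp_apply_map_window hP hx0 k).integrable_sq.aestronglyMeasurable,
    (measurePreserving_window_snd hP hσ₂ s).integral_comp_of_aestronglyMeasurable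
      (g := fun v => fderiv ℝ f v (Pi.single k 1) ^ 2)
      (hgrad k).integrable_sq.aestronglyMeasurable]

include hP hx0 hgrad hσ₁ hσ₂ in
theorem sum_crossMoment_le [IsFiniteMeasure P] (hf : ConvexOn ℝ Set.univ f)
    (hd : Differentiable ℝ f) (s : ℤ) :
    ∑ k, crossMoment f σ s k ≤ ∫ v, fderiv ℝ f v v ∂(P.map (window n 0)) := by
  refine le_of_eq_of_le ?_ (hf.integral_fderiv_apply_le hd (memLp_apply_map_window hP hx0) hgrad
    (measurePreserving_window_fst hP hσ₁ s) (measurePreserving_window_snd hP hσ₂ s))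
  unfold crossMoment
  rw [← integral_finsetSum]
  · exact integral_congr_ae (ae_of_all _ fun p =>
      (ContinuousLinearMap.apply_eq_sum_mul_single _ _).symm)
  · exact fun k _ => (memLp_window_fst_apply hP hx0 hσ₁ s k).integrable_mul
      (memLp_fderiv_window_snd hP hgrad hσ₂ s k)

include hP hx0 hgrad hσ₁ hσ₂ in
theorem integral_mul_Smap_apply_eq_sum (t : ℤ) :
    ∫ p, p.1 t * Smap f p.2 t ∂σ = ∑ k : Fin n, crossMoment f σ (t - k) k := by
  unfold crossMoment
  rw [← integral_finsetSum]
  · refine integral_congr_ae (ae_of_all _ fun p => ?_)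
    simp only [Smap_apply, Finset.mul_sum, window, sub_add_cancel]
  · exact fun k _ => (memLp_window_fst_apply hP hx0 hσ₁ _ k).integrable_mul
      (memLp_fderiv_window_snd hP hgrad hσ₂ _ k)

include hσπ hπ in
theorem integral_mul_Smap_apply_eq (t : ℤ) :
    ∫ p, p.1 t * Smap f p.2 t ∂σ = ∫ p, p.1 0 * Smap f p.2 0 ∂σ := by
  have hmeas : ∀ s : ℤ,
      AEStronglyMeasurable (fun q : (ℤ → ℝ) × (ℤ → ℝ) => q.1 s * q.2 s) π := by
    intro s; fun_prop
  calc ∫ p, p.1 t * Smap f p.2 t ∂σ = ∫ q, q.1 t * q.2 t ∂π :=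
        hσπ.integral_comp_of_aestronglyMeasurable (hmeas t)
    _ = ∫ q, shift t q.1 0 * shift t q.2 0 ∂π := by simp only [shift, zero_add]
    _ = ∫ q, q.1 0 * q.2 0 ∂π := (hπ t).integral_comp_of_aestronglyMeasurable (hmeas 0)
    _ = ∫ p, p.1 0 * Smap f p.2 0 ∂σ := (hσπ.integral_comp_of_aestronglyMeasurable (hmeas 0)).symm

variable [IsFiniteMeasure P]
include hP hx0 hgrad hσ₁ hσ₂ hσπ hπ

theorem integral_mul_Smap_le (hf : ConvexOn ℝ Set.univ f) (hd : Differentiable ℝ f) :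
    ∫ p, p.1 0 * Smap f p.2 0 ∂σ ≤ ∫ v, fderiv ℝ f v v ∂(P.map (window n 0)) :=
  le_of_forall_eq_sum_shift (fun k => ⟨_, fun s => abs_crossMoment_le hP hx0 hgrad hσ₁ hσ₂ s k⟩)
    (fun t => (integral_mul_Smap_apply_eq hσπ hπ t).symm.trans
      (integral_mul_Smap_apply_eq_sum hP hx0 hgrad hσ₁ hσ₂ t))
    (sum_crossMoment_le hP hx0 hgrad hσ₁ hσ₂ hf hd)

theorem integral_sub_S0_sq_le (hf : ConvexOn ℝ Set.univ f) (hd : Differentiable ℝ f) :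
    ∫ x, (x 0 - S0 f x) ^ 2 ∂P ≤ ∫ p, (p.1 0 - Smap f p.2 0) ^ 2 ∂σ := by
  simp only [Smap_apply_zero]
  have hS0 := memLp_S0 hP hgrad
  have hy0 : MemLp (fun p => p.1 0) 2 σ := hx0.comp_measurePreserving hσ₁
  have hz0 : MemLp (fun p => S0 f p.2) 2 σ := hS0.comp_measurePreserving hσ₂
  rw [integral_sub_sq hx0 hS0, integral_sub_sq hy0 hz0,
    hσ₁.integral_comp_of_aestronglyMeasurable (g := fun x => x 0 ^ 2)
      hx0.integrable_sq.aestronglyMeasurable,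
    hσ₂.integral_comp_of_aestronglyMeasurable (g := fun x => S0 f x ^ 2)
      hS0.integrable_sq.aestronglyMeasurable, integral_mul_S0_eq hP hx0 hgrad]
  have := integral_mul_Smap_le hP hx0 hgrad hσ₁ hσ₂ hσπ hπ hf hd
  simp only [Smap_apply_zero] at this
  linarith

end Coupling

end StationaryCoupling

open StationaryCoupling

/-- Theorem 2.2: `(X, S(X))` is an optimal stationary coupling of `μ` and `μ^S`
w.r.t. squared distance, for `S` built from the gradient of a convex function. -/
theorem optimal_stationary_coupling_sq
    {α : Type*} [MeasurableSpace α] (μ : Measure α) [IsProbabilityMeasure μ]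
    {n : ℕ} (f : (Fin n → ℝ) → ℝ) (hconv : ConvexOn ℝ Set.univ f)
    (hdiff : Differentiable ℝ f)
    (X : α → (ℤ → ℝ)) (hXm : Measurable X)
    (hstat : μ.map (fun a => leftShift (X a)) = μ.map X)
    (hX0 : MemLp (fun a => X a 0) 2 μ)
    (hgrad : ∀ k : Fin n,
      MemLp (fun a => fderiv ℝ f (fun j : Fin n => X a (j : ℤ)) (Pi.single k 1)) 2 μ)
    {β : Type*} [MeasurableSpace β] (ν : Measure β) [IsProbabilityMeasure ν]
    (Y Z : β → (ℤ → ℝ)) (hYm : Measurable Y) (hZm : Measurable Z)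
    (hjoint : ν.map (fun b => (leftShift (Y b), leftShift (Z b)))
        = ν.map (fun b => (Y b, Z b)))
    (hY : ν.map Y = μ.map X)
    (hZ : ν.map Z = (μ.map X).map (Smap f)) :
    ∫ a, (X a 0 - S0 f (X a)) ^ 2 ∂μ ≤ ∫ b, (Y b 0 - Z b 0) ^ 2 ∂ν := by
  have hYZ : Measurable fun b => (Y b, Z b) := hYm.prodMk hZm
  have hS : Measurable (Prod.map (@id (ℤ → ℝ)) (Smap f)) :=
    measurable_id.prodMap (measurable_Smap f)
  obtain ⟨σ, hσ₂, hσπ⟩ := Measure.exists_map_snd_eq_and_map_prodMap_eq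
    (π := ν.map fun b => (Y b, Z b)) (measurable_Smap f)
    (by rw [Measure.map_map measurable_snd hYZ]; exact hZ)
  have hσ₁ : σ.map Prod.fst = μ.map X := calc
    σ.map Prod.fst = (σ.map (Prod.map id (Smap f))).map Prod.fst := by
      rw [Measure.map_map measurable_fst hS]; rfl
    _ = μ.map X := by rw [hσπ, Measure.map_map measurable_fst hYZ]; exact hY
  have hsq : Measurable fun q : (ℤ → ℝ) × (ℤ → ℝ) => (q.1 0 - q.2 0) ^ 2 := by fun_prop
  calc ∫ a, (X a 0 - S0 f (X a)) ^ 2 ∂μ = ∫ x, (x 0 - S0 f x) ^ 2 ∂(μ.map X) :=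
        (integral_map hXm.aemeasurable
          (((measurable_pi_apply 0).sub (measurable_S0 f)).pow_const 2).aestronglyMeasurable).symm
    _ ≤ ∫ p, (p.1 0 - Smap f p.2 0) ^ 2 ∂σ := by
        refine integral_sub_S0_sq_le (measurePreserving_shift ?_)
          ((memLp_map_measure_iff (measurable_pi_apply 0).aestronglyMeasurable
            hXm.aemeasurable).2 hX0) (fun k => ?_)
          ⟨measurable_fst, hσ₁⟩ ⟨measurable_snd, hσ₂⟩ ⟨hS, hσπ⟩
          (measurePreserving_prodMap_shift ?_) hconv hdiff
        · rw [Measure.map_map measurable_leftShift hXm]; exact hstat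
        · rw [Measure.map_map (measurable_window n 0) hXm, window_zero]
          exact (memLp_map_measure_iff (measurable_fderiv_apply_const ℝ f _).aestronglyMeasurable
            (by fun_prop)).2 (hgrad k)
        · rw [Measure.map_map (measurable_leftShift.prodMap measurable_leftShift) hYZ]
          exact hjoint
    _ = ∫ q, (q.1 0 - q.2 0) ^ 2 ∂(ν.map fun b => (Y b, Z b)) :=
        MeasurePreserving.integral_comp_of_aestronglyMeasurable ⟨hS, hσπ⟩
          hsq.aestronglyMeasurable
    _ = ∫ b, (Y b 0 - Z b 0) ^ 2 ∂ν := integral_map hYZ.aemeasurable hsq.aestronglyMeasurable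
end

section
/- Let E1, E2 ⊂ R be disjoint open intervals and p ≥ 2. For the cost c(x,y) = |x−y|^p / p on E1 × E2, the mixed second derivative c_{x,y} = −(p−1)|x−y|^{p−2} is nonzero everywhere, and the cross-curvature quantity σ(x,y) = −c_{xx,yy} + c_{xx,y} c_{x,yy} / c_{x,y} equals (p−1)(p−2)|x−y|^{p−4} ≥ 0 for all (x,y) ∈ E1 × E2. -/
/-!
The cost depends only on `t = x - y`: with `g t = |t| ^ p / p`, every `x`-derivative is a
derivative of `g` and every `y`-derivative a negated one, so `c_{x,y} = -g''` and
`σ = -g'''' + g'''² / g''`. Away from `t = 0` the chain rule gives `(|t| ^ a)' = a |t| ^ (a-2) t`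
and `(|t| ^ a t)' = (a+1) |t| ^ a`; alternating these two yields `g'' = (p-1) |t| ^ (p-2)`,
`g''' = (p-1)(p-2) |t| ^ (p-4) t` and `g'''' = (p-1)(p-2)(p-3) |t| ^ (p-4)`.
-/

open Filter

section AbsRpow

variable {a t : ℝ}

theorem hasDerivAt_abs_rpow_of_ne_zero (ht : t ≠ 0) :
    HasDerivAt (fun s : ℝ => |s| ^ a) (a * |t| ^ (a - 2) * t) t := by
  have habs : 0 < |t| := abs_pos.2 ht
  have hsign : |t| * (SignType.sign t : ℝ) = t := by
    rcases ht.lt_or_gt with h | h <;> simp [abs_of_neg, abs_of_pos, h]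
  refine ((Real.hasDerivAt_rpow_const (Or.inl habs.ne')).comp t (hasDerivAt_abs ht)).congr_deriv ?_
  rw [show a - 1 = (a - 2) + 1 by ring, Real.rpow_add habs, Real.rpow_one]
  linear_combination a * |t| ^ (a - 2) * hsign

theorem abs_rpow_sub_two_mul_sq (ht : t ≠ 0) : |t| ^ (a - 2) * t ^ 2 = |t| ^ a := by
  rw [← sq_abs, ← Real.rpow_natCast, ← Real.rpow_add (abs_pos.2 ht)]
  norm_num

theorem hasDerivAt_abs_rpow_mul_self (ht : t ≠ 0) :
    HasDerivAt (fun s : ℝ => |s| ^ a * s) ((a + 1) * |t| ^ a) t := by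
  refine ((hasDerivAt_abs_rpow_of_ne_zero ht).mul (hasDerivAt_id' t)).congr_deriv ?_
  linear_combination a * abs_rpow_sub_two_mul_sq (a := a) ht

theorem deriv_eq_of_forall_ne_zero {f g : ℝ → ℝ} (h : ∀ s ≠ 0, f s = g s) (ht : t ≠ 0) :
    deriv f t = deriv g t :=
  EventuallyEq.deriv_eq (by filter_upwards [eventually_ne_nhds ht] with s hs using h s hs)

end AbsRpow

section CrossCurvature

noncomputable def partialFst (c : ℝ → ℝ → ℝ) : ℝ → ℝ → ℝ :=
  fun x y => deriv (fun x' => c x' y) x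

noncomputable def partialSnd (c : ℝ → ℝ → ℝ) : ℝ → ℝ → ℝ :=
  fun x y => deriv (fun y' => c x y') y

noncomputable def crossCurvature (c : ℝ → ℝ → ℝ) (x y : ℝ) : ℝ :=
  -partialSnd (partialSnd (partialFst (partialFst c))) x y +
    partialSnd (partialFst (partialFst c)) x y * partialSnd (partialSnd (partialFst c)) x y /
      partialSnd (partialFst c) x y

variable (g : ℝ → ℝ)

theorem partialFst_comp_sub : partialFst (fun x y => g (x - y)) = fun x y => deriv g (x - y) :=
  funext₂ fun x y => deriv_comp_sub_const g y x

theorem partialSnd_comp_sub : partialSnd (fun x y => g (x - y)) = fun x y => -deriv g (x - y) :=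
  funext₂ fun x y => deriv_comp_const_sub g x y

theorem partialSnd_neg (c : ℝ → ℝ → ℝ) :
    partialSnd (fun x y => -c x y) = fun x y => -partialSnd c x y :=
  funext₂ fun _ _ => deriv.fun_neg

theorem partialSnd_partialFst_comp_sub (x y : ℝ) :
    partialSnd (partialFst (fun x y => g (x - y))) x y = -deriv^[2] g (x - y) := by
  simp only [partialFst_comp_sub, partialSnd_comp_sub, Function.iterate_succ_apply',
    Function.iterate_zero_apply]

theorem crossCurvature_comp_sub (x y : ℝ) :
    crossCurvature (fun x y => g (x - y)) x y =
      -deriv^[4] g (x - y) + deriv^[3] g (x - y) ^ 2 / deriv^[2] g (x - y) := by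
  simp only [crossCurvature, partialFst_comp_sub, partialSnd_comp_sub, partialSnd_neg,
    Function.iterate_succ_apply', Function.iterate_zero_apply]
  ring

end CrossCurvature

section PowerCost

variable {p t x y : ℝ}

theorem deriv_abs_rpow_div (hp : p ≠ 0) (ht : t ≠ 0) :
    deriv (fun s : ℝ => |s| ^ p / p) t = |t| ^ (p - 2) * t := by
  rw [((hasDerivAt_abs_rpow_of_ne_zero ht).div_const p).deriv]
  field_simp

theorem deriv2_abs_rpow_div (hp : p ≠ 0) (ht : t ≠ 0) :
    deriv^[2] (fun s : ℝ => |s| ^ p / p) t = (p - 1) * |t| ^ (p - 2) := by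
  rw [Function.iterate_succ_apply', Function.iterate_one,
    deriv_eq_of_forall_ne_zero (fun s hs => deriv_abs_rpow_div hp hs) ht,
    (hasDerivAt_abs_rpow_mul_self ht).deriv]
  ring

theorem deriv3_abs_rpow_div (hp : p ≠ 0) (ht : t ≠ 0) :
    deriv^[3] (fun s : ℝ => |s| ^ p / p) t = (p - 1) * (p - 2) * (|t| ^ (p - 4) * t) := by
  rw [Function.iterate_succ_apply',
    deriv_eq_of_forall_ne_zero (fun s hs => deriv2_abs_rpow_div hp hs) ht,
    ((hasDerivAt_abs_rpow_of_ne_zero ht).const_mul (p - 1)).deriv, show p - 2 - 2 = p - 4 by ring]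
  ring

theorem deriv4_abs_rpow_div (hp : p ≠ 0) (ht : t ≠ 0) :
    deriv^[4] (fun s : ℝ => |s| ^ p / p) t = (p - 1) * (p - 2) * (p - 3) * |t| ^ (p - 4) := by
  rw [Function.iterate_succ_apply',
    deriv_eq_of_forall_ne_zero (fun s hs => deriv3_abs_rpow_div hp hs) ht,
    ((hasDerivAt_abs_rpow_mul_self ht).const_mul ((p - 1) * (p - 2))).deriv]
  ring


theorem partialSnd_partialFst_abs_sub_rpow_div (hp : p ≠ 0) (hxy : x ≠ y) :
    partialSnd (partialFst (fun x y => |x - y| ^ p / p)) x y = -(p - 1) * |x - y| ^ (p - 2) := by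
  rw [partialSnd_partialFst_comp_sub (fun s => |s| ^ p / p),
    deriv2_abs_rpow_div hp (sub_ne_zero.2 hxy), neg_mul]

theorem crossCurvature_abs_sub_rpow_div (hp0 : p ≠ 0) (hp1 : p ≠ 1) (hxy : x ≠ y) :
    crossCurvature (fun x y => |x - y| ^ p / p) x y = (p - 1) * (p - 2) * |x - y| ^ (p - 4) := by
  have ht : x - y ≠ 0 := sub_ne_zero.2 hxy
  have hp1' : p - 1 ≠ 0 := sub_ne_zero.2 hp1
  have hB : |x - y| ^ (p - 4) ≠ 0 := by positivity
  rw [crossCurvature_comp_sub (fun s => |s| ^ p / p), deriv2_abs_rpow_div hp0 ht,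
    deriv3_abs_rpow_div hp0 ht, deriv4_abs_rpow_div hp0 ht,
    ← abs_rpow_sub_two_mul_sq (a := p - 2) ht, show p - 2 - 2 = p - 4 by ring]
  field_simp
  ring

end PowerCost

theorem power_cost_cross_curvature_general (p : ℝ) (hp : 2 ≤ p) (E1 E2 : Set ℝ)
    (hd : Disjoint E1 E2) :
    let c : ℝ → ℝ → ℝ := fun x y => |x - y| ^ p / p
    let cx : ℝ → ℝ → ℝ := fun x y => deriv (fun x' => c x' y) x
    let cxx : ℝ → ℝ → ℝ := fun x y => deriv (fun x' => cx x' y) x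
    let cxy : ℝ → ℝ → ℝ := fun x y => deriv (fun y' => cx x y') y
    let cxyy : ℝ → ℝ → ℝ := fun x y => deriv (fun y' => cxy x y') y
    let cxxy : ℝ → ℝ → ℝ := fun x y => deriv (fun y' => cxx x y') y
    let cxxyy : ℝ → ℝ → ℝ := fun x y => deriv (fun y' => cxxy x y') y
    ∀ x ∈ E1, ∀ y ∈ E2,
      cxy x y = -(p - 1) * |x - y| ^ (p - 2) ∧
      cxy x y ≠ 0 ∧
      -(cxxyy x y) + cxxy x y * cxyy x y / cxy x y
        = (p - 1) * (p - 2) * |x - y| ^ (p - 4) ∧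
      0 ≤ -(cxxyy x y) + cxxy x y * cxyy x y / cxy x y := by
  intro c cx cxx cxy cxyy cxxy cxxyy x hx y hy
  have hxy : x ≠ y := fun h => Set.disjoint_left.1 hd hx (h ▸ hy)
  have hcxy : cxy x y = -(p - 1) * |x - y| ^ (p - 2) :=
    partialSnd_partialFst_abs_sub_rpow_div (by linarith) hxy
  have hσ : -(cxxyy x y) + cxxy x y * cxyy x y / cxy x y
      = (p - 1) * (p - 2) * |x - y| ^ (p - 4) :=
    crossCurvature_abs_sub_rpow_div (by linarith) (by linarith) hxy
  refine ⟨hcxy, ?_, hσ, hσ ▸ ?_⟩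
  · rw [hcxy]
    exact mul_ne_zero (by linarith) (by positivity)
  · exact mul_nonneg (mul_nonneg (by linarith) (by linarith)) (by positivity)

/-- For disjoint open intervals `E1, E2 ⊂ ℝ` and `c(x,y) = |x−y|^p/p` with `p ≥ 2`:
`c_{x,y} = −(p−1)|x−y|^{p−2} ≠ 0` and
`σ = −c_{xx,yy} + c_{xx,y} c_{x,yy}/c_{x,y} = (p−1)(p−2)|x−y|^{p−4} ≥ 0`. -/
theorem power_cost_cross_curvature (p : ℝ) (hp : 2 ≤ p) (E1 E2 : Set ℝ)
    (h1 : ∃ a b : ℝ, E1 = Set.Ioo a b) (h2 : ∃ a b : ℝ, E2 = Set.Ioo a b)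
    (hd : Disjoint E1 E2) :
    let c : ℝ → ℝ → ℝ := fun x y => |x - y| ^ p / p
    let cx : ℝ → ℝ → ℝ := fun x y => deriv (fun x' => c x' y) x
    let cxx : ℝ → ℝ → ℝ := fun x y => deriv (fun x' => cx x' y) x
    let cxy : ℝ → ℝ → ℝ := fun x y => deriv (fun y' => cx x y') y
    let cxyy : ℝ → ℝ → ℝ := fun x y => deriv (fun y' => cxy x y') y
    let cxxy : ℝ → ℝ → ℝ := fun x y => deriv (fun y' => cxx x y') y
    let cxxyy : ℝ → ℝ → ℝ := fun x y => deriv (fun y' => cxxy x y') y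
    ∀ x ∈ E1, ∀ y ∈ E2,
      cxy x y = -(p - 1) * |x - y| ^ (p - 2) ∧
      cxy x y ≠ 0 ∧
      -(cxxyy x y) + cxxy x y * cxyy x y / cxy x y
        = (p - 1) * (p - 2) * |x - y| ^ (p - 4) ∧
      0 ≤ -(cxxyy x y) + cxxy x y * cxyy x y / cxy x y :=
  power_cost_cross_curvature_general p hp E1 E2 hd
end

section
/- Let G be the free group on two generators f1 and f2. Then there is no sequence (F_n) of nonempty finite subsets of G satisfying |F_n ∩ (hF_n)|/|F_n| → 1 for all h ∈ G; in fact, for any nonempty finite F ⊂ G, the boundary set (f1 F ∪ f2 F ∪ f1^{−1} F ∪ f2^{−1} F) \ F has at least |F| + 2 elements. -/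
/-!
Call a letter `x` extending for `g` when the word `x :: g.toWord` is already reduced. Only the
inverse of the first letter of `g` fails to extend, so in the free group on two generators every
`g` has at least three extending letters, and `x` and `g` can be read off the reduced word of
`x * g`. Hence a finite nonempty `F` has at least `3|F|` extensions, of which at most `|F| - 1`
lie in `F` (none is the shortest element of `F`): the boundary has at least `2|F| + 1` elements.
Summing `|sF \ F| / |F|` over the four generators then keeps the Følner ratios away from `1`.
-/

open Finset Pointwise Filter Topology

section Group

variable {G : Type*} [Group G] [DecidableEq G]

theorem card_mul_sdiff_le_sum (S F : Finset G) :
    #((S * F) \ F) ≤ ∑ s ∈ S, #((s • F) \ F) := by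
  refine (card_le_card fun w hw => ?_).trans card_biUnion_le
  obtain ⟨hwSF, hwF⟩ := mem_sdiff.1 hw
  obtain ⟨s, hs, g, hg, rfl⟩ := mem_mul.1 hwSF
  exact mem_biUnion.2 ⟨s, hs, mem_sdiff.2 ⟨smul_mem_smul_finset hg, hwF⟩⟩

theorem card_inter_image_mul_left_add_card_sdiff (F : Finset G) (h : G) :
    #(F ∩ F.image (h * ·)) + #((h • F) \ F) = #F := by
  rw [inter_comm, add_comm, ← image_smul, ← card_image_of_injective F (mul_right_injective h)]
  exact card_sdiff_add_card_inter _ _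

theorem not_exists_folner_of_card_le_card_mul_sdiff (S : Finset G)
    (hS : ∀ F : Finset G, F.Nonempty → #F ≤ #((S * F) \ F)) :
    ¬ ∃ Fn : ℕ → Finset G, (∀ n, (Fn n).Nonempty) ∧
      ∀ h : G,
        Tendsto (fun n => (#(Fn n ∩ (Fn n).image (h * ·)) : ℝ) / #(Fn n)) atTop (𝓝 1) := by
  rintro ⟨Fn, hne, htend⟩
  set d : G → ℕ → ℝ := fun s n => (#((s • Fn n) \ Fn n) : ℝ) / #(Fn n)
  have hd : ∀ s, Tendsto (d s) atTop (𝓝 0) := fun s => by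
    have hpos : ∀ n, (0 : ℝ) < #(Fn n) := fun n => by exact_mod_cast (hne n).card_pos
    convert (htend s).const_sub 1 using 2 with n
    · rw [eq_sub_iff_add_eq, ← add_div, div_eq_one_iff_eq (hpos n).ne',
        ← card_inter_image_mul_left_add_card_sdiff (Fn n) s, Nat.cast_add, add_comm]
    · simp
  have hsum_ge : ∀ n, 1 ≤ ∑ s ∈ S, d s n := fun n => by
    have hpos : (0 : ℝ) < #(Fn n) := by exact_mod_cast (hne n).card_pos
    rw [← sum_div, le_div_iff₀ hpos, one_mul]
    exact_mod_cast (hS _ (hne n)).trans (card_mul_sdiff_le_sum S (Fn n))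
  have := ge_of_tendsto' (tendsto_finsetSum S fun s _ => hd s) hsum_ge
  norm_num at this

end Group

namespace FreeGroup

variable {α : Type*} [DecidableEq α]

theorem toWord_mk_singleton_mul (x : α × Bool) (g : FreeGroup α) :
    (mk [x] * g).toWord = List.casesOn g.toWord [x] fun hd tl =>
      if x.1 = hd.1 ∧ x.2 = !hd.2 then tl else x :: hd :: tl := by
  rw [toWord_mul, toWord_mk, reduce_singleton, List.singleton_append, reduce.cons, reduce_toWord]

theorem exists_toWord_eq_cons_of_toWord_mk_singleton_mul_ne {x : α × Bool} {g : FreeGroup α}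
    (hx : (mk [x] * g).toWord ≠ x :: g.toWord) : ∃ tl, g.toWord = (x.1, !x.2) :: tl := by
  rw [toWord_mk_singleton_mul] at hx
  cases hg : g.toWord with
  | nil => simp [hg] at hx
  | cons hd tl =>
    by_cases hc : x.1 = hd.1 ∧ x.2 = !hd.2
    · exact ⟨tl, by simp [hc.1, hc.2]⟩
    · simp [hg, hc] at hx

variable [Fintype α]

def extendingLetters (g : FreeGroup α) : Finset (α × Bool) :=
  {x | (mk [x] * g).toWord = x :: g.toWord}

theorem mem_extendingLetters {x : α × Bool} {g : FreeGroup α} :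
    x ∈ extendingLetters g ↔ (mk [x] * g).toWord = x :: g.toWord := by
  simp [extendingLetters]

theorem norm_mk_singleton_mul {x : α × Bool} {g : FreeGroup α} (hx : x ∈ extendingLetters g) :
    norm (mk [x] * g) = norm g + 1 := by
  simp only [norm, mem_extendingLetters.1 hx, List.length_cons]

theorem eq_of_mk_singleton_mul_eq {x y : α × Bool} {g h : FreeGroup α}
    (hx : x ∈ extendingLetters g) (hy : y ∈ extendingLetters h) (e : mk [x] * g = mk [y] * h) :
    x = y ∧ g = h := by
  have := congrArg toWord e
  rw [mem_extendingLetters.1 hx, mem_extendingLetters.1 hy, List.cons.injEq, toWord_inj] at this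
  exact this

theorem two_mul_card_le_card_extendingLetters_add_one (g : FreeGroup α) :
    2 * Fintype.card α ≤ #(extendingLetters g) + 1 := by
  have hrest : #({x | ¬(mk [x] * g).toWord = x :: g.toWord} : Finset (α × Bool)) ≤ 1 := by
    refine card_le_one.2 fun a ha b hb => ?_
    obtain ⟨tl, hg⟩ := exists_toWord_eq_cons_of_toWord_mk_singleton_mul_ne (mem_filter.1 ha).2
    obtain ⟨tl', hg'⟩ := exists_toWord_eq_cons_of_toWord_mk_singleton_mul_ne (mem_filter.1 hb).2
    have := (List.cons.inj (hg.symm.trans hg')).1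
    simp only [Prod.mk.injEq, Bool.not_inj_iff] at this
    exact Prod.ext this.1 this.2
  have := card_filter_add_card_filter_not (s := univ)
    (p := fun x : α × Bool => (mk [x] * g).toWord = x :: g.toWord)
  rw [card_univ, Fintype.card_prod, Fintype.card_bool] at this
  rw [extendingLetters]
  omega

variable (α) in
def letters : Finset (FreeGroup α) := univ.image fun x : α × Bool => mk [x]

def extensions (F : Finset (FreeGroup α)) : Finset (FreeGroup α) :=
  (F.sigma extendingLetters).image fun p => mk [p.2] * p.1

theorem le_card_extensions (F : Finset (FreeGroup α)) :
    (2 * Fintype.card α - 1) * #F ≤ #(extensions F) := by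
  rw [extensions, card_image_of_injOn, card_sigma]
  · rw [mul_comm, ← smul_eq_mul, ← sum_const]
    exact sum_le_sum fun g _ => by have := two_mul_card_le_card_extendingLetters_add_one g; omega
  · rintro ⟨g, x⟩ hp ⟨h, y⟩ hq e
    simp only [coe_sigma, Set.mem_sigma_iff, mem_coe] at hp hq
    obtain ⟨rfl, rfl⟩ := eq_of_mk_singleton_mul_eq hp.2 hq.2 e
    rfl

theorem extensions_inter_subset_erase {F : Finset (FreeGroup α)} {m : FreeGroup α}
    (hmin : ∀ g ∈ F, norm m ≤ norm g) : extensions F ∩ F ⊆ F.erase m := by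
  intro w hw
  obtain ⟨hwE, hwF⟩ := mem_inter.1 hw
  obtain ⟨⟨g, x⟩, hp, rfl⟩ := mem_image.1 hwE
  simp only [mem_sigma] at hp
  refine mem_erase.2 ⟨fun hwm => ?_, hwF⟩
  have := hmin g hp.1
  rw [← hwm, norm_mk_singleton_mul hp.2] at this
  omega

theorem extensions_subset_letters_mul (F : Finset (FreeGroup α)) :
    extensions F ⊆ letters α * F := by
  intro w hw
  obtain ⟨⟨g, x⟩, hp, rfl⟩ := mem_image.1 hw
  exact mul_mem_mul (mem_image_of_mem _ (mem_univ x)) (mem_sigma.1 hp).1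

theorem le_card_letters_mul_sdiff [Nonempty α] {F : Finset (FreeGroup α)} (hF : F.Nonempty) :
    (2 * Fintype.card α - 2) * #F + 1 ≤ #((letters α * F) \ F) := by
  obtain ⟨m, hm, hmin⟩ := F.exists_min_image norm hF
  have hE := le_card_extensions F
  have hEF := card_le_card (extensions_inter_subset_erase hmin)
  have hEB := card_le_card (sdiff_subset_sdiff (extensions_subset_letters_mul F) (subset_refl F))
  have := card_sdiff_add_card_inter (extensions F) F
  have := card_erase_of_mem hm
  have := hF.card_pos
  have : 1 ≤ Fintype.card α := Fintype.card_pos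
  obtain ⟨c, hc⟩ : ∃ c, 2 * Fintype.card α - 2 = c := ⟨_, rfl⟩
  rw [show 2 * Fintype.card α - 1 = c + 1 by omega, add_one_mul] at hE
  rw [hc]
  omega

theorem letters_bool : letters Bool = {of true, of false, (of true)⁻¹, (of false)⁻¹} := by
  decide

theorem letters_bool_mul (F : Finset (FreeGroup Bool)) :
    letters Bool * F = F.image (of true * ·) ∪ F.image (of false * ·) ∪
      F.image ((of true)⁻¹ * ·) ∪ F.image ((of false)⁻¹ * ·) := by
  simp only [letters_bool, ← smul_eq_mul, ← biUnion_smul_finset, biUnion_insert,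
    singleton_biUnion, image_smul, union_assoc]

end FreeGroup

open FreeGroup
open scoped Classical

/-- The free group on two generators admits no Følner sequence; in fact for every
nonempty finite `F`, the boundary `(f₁F ∪ f₂F ∪ f₁⁻¹F ∪ f₂⁻¹F) \ F` has at least
`|F| + 2` elements. -/
theorem freeGroup_two_not_amenable :
    let G := FreeGroup Bool
    let f1 : G := FreeGroup.of true
    let f2 : G := FreeGroup.of false
    (¬ ∃ Fn : ℕ → Finset G, (∀ n, (Fn n).Nonempty) ∧
      ∀ h : G, Tendsto
        (fun n => ((Fn n ∩ (Fn n).image (fun g => h * g)).card : ℝ) / (Fn n).card)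
        atTop (𝓝 1)) ∧
    (∀ F : Finset G, F.Nonempty →
      F.card + 2 ≤
        (((F.image (fun g => f1 * g) ∪ F.image (fun g => f2 * g) ∪
            F.image (fun g => f1⁻¹ * g) ∪ F.image (fun g => f2⁻¹ * g)) \ F)).card) := by
  intro G f1 f2
  have hbound : ∀ F : Finset G, F.Nonempty → 2 * #F + 1 ≤ #((letters Bool * F) \ F) :=
    fun F hF => by simpa using le_card_letters_mul_sdiff hF
  refine ⟨not_exists_folner_of_card_le_card_mul_sdiff (letters Bool) fun F hF => ?_,
    fun F hF => ?_⟩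
  · have := hbound F hF
    omega
  · have := hbound F hF
    rw [letters_bool_mul] at this
    exact le_trans (by have := hF.card_pos; omega : #F + 2 ≤ 2 * #F + 1) this
end
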